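/- For all integers m ≥ 1 and D ≥ 1 there exists a mutually uncorrelated set of D-GC-prefix-balanced (D-GCPB) words of length 2m+1 over the four-letter DNA alphabet {A,T,G,C} whose size equals Dyck(m, D−1), the number of Dyck words of length 2m of height at most D−1. -/

import Mathlib

/-- The four-letter DNA alphabet. -/
inductive DNA | A | T | G | C
deriving DecidableEq

/-- Hamming distance between two words (of equal length) given as lists. -/
def hammingD {α : Type*} [DecidableEq α] (x y : List α) : ℕ :=
  (x.zip y).countP (fun p => decide (p.1 ≠ p.2))

/-- A binary word has `D`-bounded running digital sum if in every prefix the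
numbers of ones and zeros differ by at most `D`. -/
def brds (D : ℕ) (w : List Bool) : Prop :=
  ∀ k ≤ w.length,
    (((w.take k).count true : ℤ) - ((w.take k).count false : ℤ)).natAbs ≤ D

/-- The letters `G`, `C` of the DNA alphabet. -/
def isGC : DNA → Bool
  | DNA.G => true
  | DNA.C => true
  | _ => false

/-- A DNA word is `D`-GC-prefix-balanced if in every prefix the number of
letters from {G,C} and the number of letters from {A,T} differ by at most `D`. -/
def gcpb (D : ℕ) (w : List DNA) : Prop :=
  ∀ k ≤ w.length,
    (((w.take k).countP isGC : ℤ) - ((w.take k).countP (fun c => !(isGC c)) : ℤ)).natAbs ≤ D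

/-- A word is self-uncorrelated if no proper nonempty prefix equals the suffix
of the same length. -/
def selfUncorr {α : Type*} (w : List α) : Prop :=
  ∀ k, 1 ≤ k → k ≤ w.length - 1 → w.take k ≠ w.drop (w.length - k)

/-- A set of words is mutually uncorrelated if every word is self-uncorrelated
and for every ordered pair of distinct words `x`, `y` no nonempty prefix of `y`
equals a suffix of `x` of the same length. -/
def mutUncorr {α : Type*} (S : Set (List α)) : Prop :=
  (∀ w ∈ S, selfUncorr w) ∧
  ∀ x ∈ S, ∀ y ∈ S, x ≠ y →
    ∀ k, 1 ≤ k → k ≤ x.length → y.take k ≠ x.drop (x.length - k)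

/-- A Dyck word: equal numbers of ones and zeros, and every prefix has at least
as many ones as zeros. -/
def isDyck (w : List Bool) : Prop :=
  w.count true = w.count false ∧
  ∀ k ≤ w.length, (w.take k).count false ≤ (w.take k).count true

/-- The height of a (Dyck) word is at most `D`: in every prefix the number of
ones exceeds the number of zeros by at most `D`. -/
def heightLe (D : ℕ) (w : List Bool) : Prop :=
  ∀ k ≤ w.length, ((w.take k).count true : ℤ) - ((w.take k).count false : ℤ) ≤ (D : ℤ)

/-- `dyckCount m D`: the number of Dyck words of length `2m` of height at most `D`. -/
noncomputable def dyckCount (m D : ℕ) : ℕ :=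
  Set.ncard {w : List Bool | w.length = 2 * m ∧ isDyck w ∧ heightLe D w}

/-- Encoding of a binary word as a DNA word. -/
def encB : Bool → DNA
  | true => DNA.G
  | false => DNA.T

def enc (w : List Bool) : List DNA := DNA.A :: w.map encB

lemma enc_injective : Function.Injective enc := by
  intro u v h
  simp only [enc, List.cons.injEq, true_and] at h
  exact List.map_injective_iff.mpr (by intro a b hab; cases a <;> cases b <;> simp_all [encB]) h

lemma A_not_mem_map (u : List Bool) : DNA.A ∉ u.map encB := by
  intro h
  rcases List.mem_map.mp h with ⟨b, _, hb⟩
  cases b <;> simp [encB] at hb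

lemma countP_isGC (s : List Bool) : (s.map encB).countP isGC = s.count true := by
  rw [List.countP_map]
  unfold List.count
  apply List.countP_congr
  intro b _; cases b <;> simp [encB, isGC]

lemma countP_notGC (s : List Bool) :
    (s.map encB).countP (fun c => !(isGC c)) = s.count false := by
  rw [List.countP_map]
  unfold List.count
  apply List.countP_congr
  intro b _; cases b <;> simp [encB, isGC]

/-- for `m, D ≥ 1` there exists a mutually uncorrelated
`D`-GCPB set of DNA words of length `2m+1` of size `Dyck(m, D-1)`. -/
theorem stmt10 (m D : ℕ) (hm : 1 ≤ m) (hD : 1 ≤ D) :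
    ∃ S : Finset (List DNA),
      (∀ w ∈ S, w.length = 2 * m + 1) ∧
      mutUncorr (S : Set (List DNA)) ∧
      (∀ w ∈ S, gcpb D w) ∧
      S.card = dyckCount m (D - 1) := by
  set T : Set (List Bool) :=
    {w : List Bool | w.length = 2 * m ∧ isDyck w ∧ heightLe (D - 1) w} with hT
  have hfin : T.Finite :=
    (List.finite_length_eq Bool (2 * m)).subset (fun w hw => hw.1)
  refine ⟨hfin.toFinset.image enc, ?_, ?_, ?_, ?_⟩
  · intro w hw
    rcases Finset.mem_image.mp hw with ⟨u, hu, rfl⟩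
    have := (hfin.mem_toFinset.mp hu).1
    simp [enc, this]
  · -- mutual uncorrelation
    have key : ∀ u v : List Bool, ∀ k, 1 ≤ k → k ≤ (enc u).length - 1 →
        (enc v).take k ≠ (enc u).drop ((enc u).length - k) := by
      intro u v k hk1 hk2 h
      have hlen : (enc u).length = u.length + 1 := by simp [enc]
      obtain ⟨k', rfl⟩ : ∃ k', k = k' + 1 := ⟨k - 1, by omega⟩
      have hmemL : DNA.A ∈ (enc v).take (k' + 1) := by
        simp [enc, List.take_succ_cons]
      rw [h] at hmemL
      have hj : (enc u).length - (k' + 1) = (u.length - (k' + 1)) + 1 := by omega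
      rw [hj] at hmemL
      have : DNA.A ∈ u.map encB := by
        have := hmemL
        rw [enc, List.drop_succ_cons] at this
        exact List.mem_of_mem_drop this
      exact A_not_mem_map u this
    constructor
    · intro w hw
      rcases Finset.mem_coe.mp hw with hw
      rcases Finset.mem_image.mp hw with ⟨u, hu, rfl⟩
      intro k hk1 hk2
      exact key u u k hk1 hk2
    · intro x hx y hy hxy k hk1 hk2
      rcases Finset.mem_image.mp (Finset.mem_coe.mp hx) with ⟨u, hu, rfl⟩
      rcases Finset.mem_image.mp (Finset.mem_coe.mp hy) with ⟨v, hv, rfl⟩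
      rcases Nat.lt_or_ge k (enc u).length with hlt | hge
      · exact key u v k hk1 (by omega)
      · have hk : k = (enc u).length := by omega
        have hlenu : (enc u).length = u.length + 1 := by simp [enc]
        have hlenv : (enc v).length = v.length + 1 := by simp [enc]
        have hlu : u.length = 2 * m := (hfin.mem_toFinset.mp hu).1
        have hlv : v.length = 2 * m := (hfin.mem_toFinset.mp hv).1
        intro h
        rw [hk, Nat.sub_self, List.drop_zero, List.take_of_length_le (by omega)] at h
        exact hxy h.symm
  · -- gcpb
    intro w hw
    rcases Finset.mem_image.mp hw with ⟨u, hu, rfl⟩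
    obtain ⟨hlu, ⟨_, hdy⟩, hht⟩ := hfin.mem_toFinset.mp hu
    intro k hk
    rcases Nat.eq_zero_or_pos k with rfl | hkpos
    · simp
    obtain ⟨j, rfl⟩ : ∃ j, k = j + 1 := ⟨k - 1, by omega⟩
    have hlen : (enc u).length = u.length + 1 := by simp [enc]
    have hj : j ≤ u.length := by omega
    have htake : (enc u).take (j + 1) = DNA.A :: (u.take j).map encB := by
      simp [enc, List.take_succ_cons, List.map_take]
    rw [htake]
    have h1 : (DNA.A :: (u.take j).map encB).countP isGC = (u.take j).count true := by
      rw [List.countP_cons_of_neg (p := isGC) (a := DNA.A) (by simp [isGC]), countP_isGC]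
    have h2 : (DNA.A :: (u.take j).map encB).countP (fun c => !(isGC c))
        = (u.take j).count false + 1 := by
      rw [List.countP_cons_of_pos (p := fun c => !(isGC c)) (a := DNA.A) (by simp [isGC]), countP_notGC]
    rw [h1, h2]
    have hd := hdy j hj
    have hh := hht j hj
    have hcast : ((D - 1 : ℕ) : ℤ) = (D : ℤ) - 1 := by omega
    rw [hcast] at hh
    omega
  · rw [Finset.card_image_of_injective _ enc_injective, dyckCount, ← hT,
      Set.ncard_eq_toFinset_card T hfin]
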